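/- Let f : ℝ → ℝ be twice differentiable on an open set containing a point x with x ≠ 0. Then (L f)(x) = τ1·(1/x)·(M f)(x) + τ2·(M g)(x) − (τ0 + 2τ1τ2)·f(x)/x + (2τ1τ2 − τ3)·f(x), where g(t) = f(t)/t; that is, L = τ1 X⁻¹M + τ2 M X⁻¹ − (τ0 + 2τ1τ2)X⁻¹ + (2τ1τ2 − τ3)·Id, exhibiting the duality between L and M under x ↦ 1/x. -/

import Mathlib

/-- The hypergeometric operator acting on twice differentiable functions:
`(L f)(x) = x(1-x)f''(x) + (α+1 - (α+β+2)x)f'(x)`. -/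
noncomputable def Lfun (α β : ℝ) (f : ℝ → ℝ) (x : ℝ) : ℝ :=
  x * (1 - x) * deriv (deriv f) x + (α + 1 - (α + β + 2) * x) * deriv f x

/-- The tridiagonalized operator in explicit form:
`(M f)(x) = x²(1-x)f''(x) + x(α+1+2τ2 - (α+β+2+2τ2)x)f'(x)
  + (-(τ2(α+β+2) - τ3)x + (α+1)τ2 + τ0)f(x)`. -/
noncomputable def Mfun (α β τ0 τ2 τ3 : ℝ) (f : ℝ → ℝ) (x : ℝ) : ℝ :=
  x ^ 2 * (1 - x) * deriv (deriv f) x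
    + x * (α + 1 + 2 * τ2 - (α + β + 2 + 2 * τ2) * x) * deriv f x
    + (-(τ2 * (α + β + 2) - τ3) * x + (α + 1) * τ2 + τ0) * f x

/-- Duality between `L` and `M` under `x ↦ 1/x`:
`L = τ1 X⁻¹ M + τ2 M X⁻¹ - (τ0 + 2τ1τ2) X⁻¹ + (2τ1τ2 - τ3)·Id`. -/
theorem L_from_M_duality (α β τ0 τ1 τ2 τ3 : ℝ) (hτ : τ1 + τ2 = 1)
    (f : ℝ → ℝ) (x : ℝ) (s : Set ℝ) (hs : IsOpen s) (hxs : x ∈ s)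
    (hf : ∀ y ∈ s, DifferentiableAt ℝ f y)
    (hf' : ∀ y ∈ s, DifferentiableAt ℝ (deriv f) y)
    (hx : x ≠ 0) :
    Lfun α β f x =
      τ1 * (1 / x) * Mfun α β τ0 τ2 τ3 f x
        + τ2 * Mfun α β τ0 τ2 τ3 (fun t => f t / t) x
        - (τ0 + 2 * τ1 * τ2) * f x / x
        + (2 * τ1 * τ2 - τ3) * f x := by
  have hu : IsOpen (s ∩ {y : ℝ | y ≠ 0}) := hs.inter isOpen_ne
  have hxu : x ∈ s ∩ {y : ℝ | y ≠ 0} := ⟨hxs, hx⟩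
  have hmem : s ∩ {y : ℝ | y ≠ 0} ∈ nhds x := hu.mem_nhds hxu
  have hg' : ∀ y ∈ s ∩ {y : ℝ | y ≠ 0},
      deriv (fun t => f t / t) y = deriv f y / y - f y / y ^ 2 := by
    intro y hy
    have h : HasDerivAt (fun t => f t / t)
        ((deriv f y * y - f y * 1) / y ^ 2) y :=
      ((hf y hy.1).hasDerivAt.div (hasDerivAt_id y) hy.2)
    have hy0 : y ≠ 0 := hy.2
    rw [h.deriv]
    field_simp
  have hgev : deriv (fun t => f t / t) =ᶠ[nhds x]
      fun y => deriv f y / y - f y / y ^ 2 :=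
    Filter.eventually_of_mem hmem hg'
  have hderiv_g : deriv (fun t => f t / t) x = deriv f x / x - f x / x ^ 2 :=
    hg' x hxu
  have hdd : deriv (deriv (fun t => f t / t)) x
      = deriv (deriv f) x / x - 2 * deriv f x / x ^ 2 + 2 * f x / x ^ 3 := by
    rw [Filter.EventuallyEq.deriv_eq hgev]
    have h1 : HasDerivAt (fun y => deriv f y / y - f y / y ^ 2)
        ((deriv (deriv f) x * x - deriv f x * 1) / x ^ 2
          - (deriv f x * x ^ 2 - f x * ((2 : ℕ) * x ^ 1)) / (x ^ 2) ^ 2) x :=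
      ((hf' x hxs).hasDerivAt.div (hasDerivAt_id x) hx).sub
        ((hf x hxs).hasDerivAt.div (hasDerivAt_pow 2 x) (pow_ne_zero 2 hx))
    rw [h1.deriv]
    field_simp
    ring
  have hτ1 : τ1 = 1 - τ2 := by linarith
  simp only [Lfun, Mfun, hderiv_g, hdd, hτ1]
  field_simp
  ring
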